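/- arXiv:2605.14727 — 3 statements merged into one kernel-verified Lean document; each statement's English description precedes it below -/
import Mathlib

section
/- Let C be a positive integer. For every real C×C special orthogonal matrix Q (i.e., Qᵀ·Q = 1 and det Q = 1), there exists a skew-symmetric real C×C matrix A (Aᵀ = −A) with exp(A) = Q. -/
open Matrix Real
open scoped Nat

/-!
Conjugating by an orthogonal matrix that diagonalises the symmetric part of `Q`, we may assume
`Q = D + K` with `D = diagonal μ` and `K` skew. Orthogonality of `Q` then says exactly that `D` and
`K` commute and `K² = D² - 1`, so `K` only couples coordinates with equal `μ` and vanishes on the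
rows where `μ = -1`. With `θ = arccos μ` and a complex structure `J` (`J² = -1`) on the
`-1`-eigenspace of `D`, the skew matrix `B = (sinc θ)⁻¹ K + π J` satisfies `B² = -θ²`, hence
`exp B = cos θ + sinc θ · B = D + K`.

The `-1`-eigenspace has even dimension: flipping its sign turns `Q` into an orthogonal `U` such
that `1 + U` has positive definite symmetric part, hence is invertible, and then
`det (1 + U) = det U · det (1 + U)` forces `det U = 1`.
-/

namespace Real

theorem hasSum_sinc (x : ℝ) :
    HasSum (fun k : ℕ => (-1) ^ k * x ^ (2 * k) / (2 * k + 1)!) (sinc x) := by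
  rcases eq_or_ne x 0 with rfl | hx
  · convert hasSum_single (f := fun k : ℕ => (-1 : ℝ) ^ k * 0 ^ (2 * k) / (2 * k + 1)!) 0
      fun k hk => by simp [hk] using 1
    simp
  · rw [sinc_of_ne_zero hx]
    refine ((hasSum_sin x).div_const x).congr_fun fun k => ?_
    rw [pow_succ]
    field_simp

theorem sinc_mul_self (x : ℝ) : sinc x * x = sin x := by
  rcases eq_or_ne x 0 with rfl | hx
  · simp
  · rw [sinc_of_ne_zero hx, div_mul_cancel₀ _ hx]

theorem sinc_pi : sinc π = 0 := by
  rw [sinc_of_ne_zero pi_ne_zero, sin_pi, zero_div]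

theorem sinc_pos_of_nonneg_of_lt_pi {x : ℝ} (h0 : 0 ≤ x) (hπ : x < π) : 0 < sinc x := by
  rcases h0.eq_or_lt with rfl | h0
  · simp
  · rw [sinc_of_ne_zero h0.ne']
    exact div_pos (sin_pos_of_pos_of_lt_pi h0 hπ) h0

theorem sinc_arccos_ne_zero {x : ℝ} (hx : -1 < x) : sinc (arccos x) ≠ 0 :=
  (sinc_pos_of_nonneg_of_lt_pi (arccos_nonneg x) (arccos_lt_pi.mpr hx)).ne'

theorem sinc_arccos_inv_sq_mul {x : ℝ} (h₁ : -1 < x) (h₂ : x ≤ 1) :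
    (sinc (arccos x))⁻¹ ^ 2 * (x ^ 2 - 1) = -arccos x ^ 2 := by
  have hx : x ^ 2 - 1 = -(sinc (arccos x) * arccos x) ^ 2 := by
    rw [sinc_mul_self, sin_arccos, sq_sqrt (by nlinarith)]
    ring
  have := sinc_arccos_ne_zero h₁
  rw [hx]
  field_simp

end Real

namespace Matrix

variable {n : Type*} [Fintype n] [DecidableEq n]

theorem exp_eq_diagonal_cos_add_diagonal_sinc_mul {B : Matrix n n ℝ} {θ : n → ℝ}
    (hB : B * B = -diagonal fun i => θ i ^ 2) :
    NormedSpace.exp B = diagonal (fun i => cos (θ i)) + diagonal (fun i => sinc (θ i)) * B := by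
  have hpow (k : ℕ) : B ^ (2 * k) = diagonal fun i => (-1) ^ k * θ i ^ (2 * k) := by
    rw [pow_mul, sq, hB, diagonal_neg, diagonal_pow]
    congr 1
    ext i
    rw [Pi.pow_apply, neg_pow, pow_mul]
  rw [NormedSpace.exp_eq_tsum ℝ]
  refine HasSum.tsum_eq (HasSum.even_add_odd ?_ ?_)
  · refine (Pi.hasSum.mpr fun i => hasSum_cos (θ i)).matrix_diagonal.congr_fun fun k => ?_
    rw [hpow, ← diagonal_smul]
    congr 1
    ext i
    simp [div_eq_inv_mul]
  · refine ((Pi.hasSum.mpr fun i => hasSum_sinc (θ i)).matrix_diagonal.mul_right B).congr_fun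
      fun k => ?_
    rw [pow_succ, hpow, ← smul_mul_assoc, ← diagonal_smul]
    congr 2
    ext i
    simp [div_eq_inv_mul]

theorem commute_diagonal_iff {α : Type*} [CommRing α] [NoZeroDivisors α] {d : n → α}
    {K : Matrix n n α} : Commute (diagonal d) K ↔ ∀ i j, K i j = 0 ∨ d i = d j := by
  refine ⟨fun h i j => ?_, fun h => ext fun i j => ?_⟩
  · have hij : d i * K i j = K i j * d j := by
      simpa [diagonal_mul, mul_diagonal] using congrFun₂ h i j
    have : K i j * (d i - d j) = 0 := by linear_combination hij
    simpa [sub_eq_zero] using this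
  · rcases h i j with h | h <;> simp [diagonal_mul, mul_diagonal, h, mul_comm]

theorem Commute.diagonal_comp {α : Type*} [CommRing α] [NoZeroDivisors α] {d : n → α}
    {K : Matrix n n α} (h : Commute (diagonal d) K) (f : α → α) :
    Commute (diagonal (f ∘ d)) K :=
  commute_diagonal_iff.mpr fun i j => (commute_diagonal_iff.mp h i j).imp_right (congrArg f)

omit [DecidableEq n] in
theorem dotProduct_mulVec_self_eq_zero {R : Type*} [CommRing R] [NoZeroDivisors R] [CharZero R]
    {K : Matrix n n R} (hK : Kᵀ = -K) (v : n → R) : v ⬝ᵥ K *ᵥ v = 0 := by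
  rw [← CharZero.eq_neg_self_iff]
  conv_lhs => rw [dotProduct_mulVec, ← mulVec_transpose, hK, neg_mulVec, neg_dotProduct,
    dotProduct_comm]

omit [DecidableEq n] in
theorem mul_self_apply_self_of_transpose_eq_neg {R : Type*} [CommRing R] {K : Matrix n n R}
    (hK : Kᵀ = -K) (i : n) : (K * K) i i = -∑ j, K i j ^ 2 := by
  rw [mul_apply, ← Finset.sum_neg_distrib]
  refine Finset.sum_congr rfl fun j _ => ?_
  rw [← transpose_apply K i j, hK, neg_apply]
  ring

theorem det_diagonal_add_ne_zero {d : n → ℝ} (hd : ∀ i, 0 < d i) {K : Matrix n n ℝ}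
    (hK : Kᵀ = -K) : (diagonal d + K).det ≠ 0 := by
  intro h
  obtain ⟨v, hv, hKv⟩ := exists_mulVec_eq_zero_iff.mpr h
  have hsum : ∑ i, d i * v i ^ 2 = 0 := by
    calc ∑ i, d i * v i ^ 2 = v ⬝ᵥ (diagonal d + K) *ᵥ v := by
          rw [add_mulVec, dotProduct_add, dotProduct_mulVec_self_eq_zero hK, add_zero]
          simp only [dotProduct, mulVec_diagonal]
          exact Finset.sum_congr rfl fun i _ => by ring
      _ = 0 := by rw [hKv, dotProduct_zero]
  refine hv (funext fun i => ?_)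
  have hi := (Finset.sum_eq_zero_iff_of_nonneg fun i _ => mul_nonneg (hd i).le (sq_nonneg (v i))).mp
    hsum i (Finset.mem_univ i)
  exact pow_eq_zero_iff two_ne_zero |>.mp ((mul_eq_zero.mp hi).resolve_left (hd i).ne')

theorem det_eq_one_of_mul_transpose_eq_one {R : Type*} [CommRing R] [IsDomain R]
    {U : Matrix n n R} (hU : U * Uᵀ = 1) (h : (1 + U).det ≠ 0) : U.det = 1 := by
  have : U.det * (1 + U).det = (1 + U).det := by
    calc U.det * (1 + U).det = (U * (1 + U)ᵀ).det := by rw [det_mul, det_transpose]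
      _ = (1 + U).det := by rw [transpose_add, transpose_one, mul_add, hU, mul_one, add_comm]
  simpa [h] using this

theorem exists_transpose_eq_neg_mul_self_eq_neg_one {R m : Type*} [CommRing R] [Fintype m]
    [DecidableEq m] (hm : Even (Fintype.card m)) :
    ∃ J : Matrix m m R, Jᵀ = -J ∧ J * J = -1 := by
  obtain ⟨k, hk⟩ := hm
  let e : m ≃ Fin k ⊕ Fin k := (Fintype.equivFinOfCardEq hk).trans finSumFinEquiv.symm
  let J₀ : Matrix (Fin k ⊕ Fin k) (Fin k ⊕ Fin k) R := fromBlocks 0 (-1) 1 0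
  have hJ₀ : J₀ᵀ = -J₀ := by simp [J₀, fromBlocks_transpose, fromBlocks_neg]
  have hJ₀J₀ : J₀ * J₀ = -1 := by
    simp [J₀, fromBlocks_multiply, ← fromBlocks_one, fromBlocks_neg]
  refine ⟨J₀.submatrix e e, ?_, ?_⟩
  · rw [transpose_submatrix, hJ₀]
    rfl
  · rw [submatrix_mul_equiv, hJ₀J₀]
    exact congrArg Neg.neg (submatrix_one_equiv e)

theorem exists_transpose_eq_neg_mul_self_eq_neg_diagonal {R : Type*} [CommRing R]
    (p : n → Prop) [DecidablePred p] (hp : Even (Fintype.card {i // p i})) :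
    ∃ J : Matrix n n R, Jᵀ = -J ∧ J * J = -diagonal (fun i => if p i then 1 else 0) ∧
      ∀ i j, J i j ≠ 0 → p i ∧ p j := by
  obtain ⟨J₀, hJ₀, hJ₀J₀⟩ := exists_transpose_eq_neg_mul_self_eq_neg_one (R := R) hp
  let e := (Equiv.sumCompl p).symm
  refine ⟨(fromBlocks J₀ 0 0 0).submatrix e e, ?_, ?_, fun i j hij => ?_⟩
  · rw [transpose_submatrix, fromBlocks_transpose, hJ₀]
    ext i j
    by_cases hi : p i <;> by_cases hj : p j <;> simp [e, hi, hj]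
  · rw [submatrix_mul_equiv, fromBlocks_multiply]
    ext i j
    by_cases hi : p i <;> by_cases hj : p j <;>
      simp [e, hi, hj, hJ₀J₀, one_apply, diagonal_apply]
    rintro rfl
    contradiction
  · by_cases hi : p i <;> by_cases hj : p j <;> simp_all [e]

section DiagonalAddSkew

variable {μ : n → ℝ} {K : Matrix n n ℝ} (hK : Kᵀ = -K)
  (hR : (diagonal μ + K)ᵀ * (diagonal μ + K) = 1)
include hK hR

theorem diagonal_sub_mul_diagonal_add : (diagonal μ - K) * (diagonal μ + K) = 1 := by
  rw [← hR, transpose_add, diagonal_transpose, hK, sub_eq_add_neg]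

theorem diagonal_add_mul_diagonal_sub : (diagonal μ + K) * (diagonal μ - K) = 1 := by
  rw [← mul_eq_one_comm.mp hR, transpose_add, diagonal_transpose, hK, sub_eq_add_neg]

theorem commute_diagonal_of_orthogonal : Commute (diagonal μ) K := by
  have h : (diagonal μ * K - K * diagonal μ) + (diagonal μ * K - K * diagonal μ) = 0 := by
    rw [← sub_self (1 : Matrix n n ℝ)]
    nth_rewrite 1 [← diagonal_sub_mul_diagonal_add hK hR]
    rw [← diagonal_add_mul_diagonal_sub hK hR]
    noncomm_ring
  rw [← two_smul ℝ, smul_eq_zero, sub_eq_zero] at h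
  exact h.resolve_left two_ne_zero

theorem mul_self_eq_diagonal_of_orthogonal : K * K = diagonal fun i => μ i ^ 2 - 1 := by
  have hD : (diagonal fun i => μ i ^ 2 - 1) = diagonal μ * diagonal μ - 1 := by
    rw [diagonal_mul_diagonal, ← diagonal_one, diagonal_sub]
    simp only [sq]
  rw [hD, ← diagonal_sub_mul_diagonal_add hK hR, sub_mul, mul_add, mul_add,
    (commute_diagonal_of_orthogonal hK hR).eq]
  abel

theorem sum_sq_apply_of_orthogonal (i : n) : ∑ j, K i j ^ 2 = 1 - μ i ^ 2 := by
  have := mul_self_apply_self_of_transpose_eq_neg hK i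
  rw [mul_self_eq_diagonal_of_orthogonal hK hR, diagonal_apply_eq] at this
  linarith

theorem mem_Icc_of_orthogonal (i : n) : μ i ∈ Set.Icc (-1) 1 := by
  have := sum_sq_apply_of_orthogonal hK hR i
  have : 0 ≤ ∑ j, K i j ^ 2 := Finset.sum_nonneg fun j _ => sq_nonneg _
  exact abs_le.mp (sq_le_one_iff_abs_le_one _ |>.mp (by linarith))

theorem apply_eq_zero_of_eq_neg_one {i : n} (hi : μ i = -1) (j : n) : K i j = 0 := by
  have h := sum_sq_apply_of_orthogonal hK hR i
  rw [hi, neg_one_sq, sub_self] at h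
  exact pow_eq_zero_iff two_ne_zero |>.mp <|
    (Finset.sum_eq_zero_iff_of_nonneg fun j _ => sq_nonneg _).mp h j (Finset.mem_univ j)

theorem apply_eq_zero_of_eq_neg_one' (i : n) {j : n} (hj : μ j = -1) : K i j = 0 := by
  rw [← neg_eq_zero, ← neg_apply, ← hK, transpose_apply, apply_eq_zero_of_eq_neg_one hK hR hj]

theorem even_card_eq_neg_one (hdet : (diagonal μ + K).det = 1) :
    Even (Fintype.card {i // μ i = -1}) := by
  set ε : n → ℝ := fun i => if μ i = -1 then -1 else 1
  have hεε : diagonal ε * diagonal ε = 1 := by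
    rw [diagonal_mul_diagonal, ← diagonal_one]
    congr 1
    ext i
    by_cases hi : μ i = -1 <;> simp [ε, hi]
  have hKε : K * diagonal ε = K := by
    ext i j
    by_cases hj : μ j = -1
    · simp [apply_eq_zero_of_eq_neg_one' hK hR i hj]
    · simp [ε, hj]
  have hpos (i : n) : 0 < 1 + μ i * ε i := by
    by_cases hi : μ i = -1
    · simp [ε, hi]
    · have : -1 < μ i := lt_of_le_of_ne (mem_Icc_of_orthogonal hK hR i).1 (Ne.symm hi)
      simp only [ε, hi, if_false]
      linarith
  have hdetU : ((diagonal μ + K) * diagonal ε).det = 1 := by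
    refine det_eq_one_of_mul_transpose_eq_one ?_ ?_
    · rw [transpose_mul, diagonal_transpose, Matrix.mul_assoc, ← Matrix.mul_assoc (diagonal ε),
        hεε, Matrix.one_mul, mul_eq_one_comm.mp hR]
    · rw [add_mul, hKε, diagonal_mul_diagonal, ← add_assoc, ← diagonal_one, diagonal_add]
      exact det_diagonal_add_ne_zero hpos hK
  rw [det_mul, hdet, one_mul, det_diagonal] at hdetU
  simp only [ε, Finset.prod_ite, Finset.prod_const, one_pow, mul_one] at hdetU
  rw [Fintype.card_subtype]
  exact (neg_one_pow_eq_one_iff_even (R := ℝ) (by norm_num)).mp hdetU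

theorem mul_eq_zero_of_apply_ne_zero {J : Matrix n n ℝ}
    (hJ : ∀ i j, J i j ≠ 0 → μ i = -1 ∧ μ j = -1) : K * J = 0 := by
  ext i j
  rw [mul_apply, zero_apply]
  refine Finset.sum_eq_zero fun l _ => ?_
  by_cases hl : μ l = -1
  · rw [apply_eq_zero_of_eq_neg_one' hK hR i hl, zero_mul]
  · rw [not_ne_iff.mp fun h => hl (hJ l j h).1, mul_zero]

theorem mul_eq_zero_of_apply_ne_zero' {J : Matrix n n ℝ}
    (hJ : ∀ i j, J i j ≠ 0 → μ i = -1 ∧ μ j = -1) : J * K = 0 := by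
  ext i j
  rw [mul_apply, zero_apply]
  refine Finset.sum_eq_zero fun l _ => ?_
  by_cases hl : μ l = -1
  · rw [apply_eq_zero_of_eq_neg_one hK hR hl, mul_zero]
  · rw [not_ne_iff.mp fun h => hl (hJ i l h).2, zero_mul]

end DiagonalAddSkew

noncomputable def skewLog (μ : n → ℝ) (K J : Matrix n n ℝ) : Matrix n n ℝ :=
  diagonal (fun i => (sinc (arccos (μ i)))⁻¹) * K + π • J

section SkewLog

variable {μ : n → ℝ} {K J : Matrix n n ℝ} (hK : Kᵀ = -K)
  (hR : (diagonal μ + K)ᵀ * (diagonal μ + K) = 1)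
include hK hR

theorem commute_diagonal_sinc_arccos_inv :
    Commute (diagonal fun i => (sinc (arccos (μ i)))⁻¹) K :=
  (commute_diagonal_of_orthogonal hK hR).diagonal_comp fun x => (sinc (arccos x))⁻¹

theorem transpose_skewLog (hJ : Jᵀ = -J) : (skewLog μ K J)ᵀ = -skewLog μ K J := by
  rw [skewLog, transpose_add, transpose_mul, diagonal_transpose, hK, transpose_smul, hJ,
    Matrix.neg_mul, ← (commute_diagonal_sinc_arccos_inv hK hR).eq, smul_neg, neg_add]

theorem skewLog_mul_self (hJJ : J * J = -diagonal fun i => if μ i = -1 then 1 else 0)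
    (hJ : ∀ i j, J i j ≠ 0 → μ i = -1 ∧ μ j = -1) :
    skewLog μ K J * skewLog μ K J = -diagonal fun i => arccos (μ i) ^ 2 := by
  set C := diagonal fun i => (sinc (arccos (μ i)))⁻¹
  have hC := commute_diagonal_sinc_arccos_inv hK hR
  have hCK : C * K * (C * K) =
      diagonal fun i => (sinc (arccos (μ i)))⁻¹ ^ 2 * (μ i ^ 2 - 1) := by
    rw [Matrix.mul_assoc, ← Matrix.mul_assoc K, ← hC.eq, Matrix.mul_assoc,
      mul_self_eq_diagonal_of_orthogonal hK hR, ← Matrix.mul_assoc, diagonal_mul_diagonal,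
      diagonal_mul_diagonal]
    simp only [sq]
  have hCKJ : C * K * J = 0 := by
    rw [Matrix.mul_assoc, mul_eq_zero_of_apply_ne_zero hK hR hJ, Matrix.mul_zero]
  have hJCK : J * (C * K) = 0 := by
    rw [hC.eq, ← Matrix.mul_assoc, mul_eq_zero_of_apply_ne_zero' hK hR hJ, Matrix.zero_mul]
  rw [skewLog, add_mul, mul_add, mul_add, hCK, mul_smul_comm, hCKJ, smul_mul_assoc, hJCK,
    smul_mul_smul, hJJ, smul_zero, add_zero, zero_add, smul_neg, ← diagonal_smul,
    ← sub_eq_add_neg, diagonal_sub, diagonal_neg]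
  congr 1
  ext i
  by_cases hi : μ i = -1
  · simp [hi, arccos_neg_one, sq]
  · simp only [Pi.smul_apply, hi, if_false, smul_zero, sub_zero]
    exact sinc_arccos_inv_sq_mul (lt_of_le_of_ne (mem_Icc_of_orthogonal hK hR i).1 (Ne.symm hi))
      (mem_Icc_of_orthogonal hK hR i).2

theorem exp_skewLog (hJJ : J * J = -diagonal fun i => if μ i = -1 then 1 else 0)
    (hJ : ∀ i j, J i j ≠ 0 → μ i = -1 ∧ μ j = -1) :
    NormedSpace.exp (skewLog μ K J) = diagonal μ + K := by
  have hcos : (diagonal fun i => cos (arccos (μ i))) = diagonal μ :=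
    congrArg diagonal (funext fun i => cos_arccos (mem_Icc_of_orthogonal hK hR i).1
      (mem_Icc_of_orthogonal hK hR i).2)
  have hsincK : (diagonal fun i => sinc (arccos (μ i))) *
      ((diagonal fun i => (sinc (arccos (μ i)))⁻¹) * K) = K := by
    ext i j
    rw [← Matrix.mul_assoc, diagonal_mul_diagonal, diagonal_mul]
    by_cases hi : μ i = -1
    · rw [apply_eq_zero_of_eq_neg_one hK hR hi, mul_zero]
    · rw [mul_inv_cancel₀ (sinc_arccos_ne_zero
        (lt_of_le_of_ne (mem_Icc_of_orthogonal hK hR i).1 (Ne.symm hi))), one_mul]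
  have hsincJ : (diagonal fun i => sinc (arccos (μ i))) * J = 0 := by
    ext i j
    rw [diagonal_mul, zero_apply]
    by_cases hi : μ i = -1
    · simp [hi, arccos_neg_one, sinc_pi]
    · rw [not_ne_iff.mp fun h => hi (hJ i j h).1, mul_zero]
  rw [exp_eq_diagonal_cos_add_diagonal_sinc_mul (skewLog_mul_self hK hR hJJ hJ), skewLog, mul_add,
    mul_smul_comm, hcos, hsincK, hsincJ, smul_zero, add_zero]

theorem exists_transpose_eq_neg_exp_eq_diagonal_add (hdet : (diagonal μ + K).det = 1) :
    ∃ B : Matrix n n ℝ, Bᵀ = -B ∧ NormedSpace.exp B = diagonal μ + K := by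
  obtain ⟨J, hJ, hJJ, hJsupp⟩ := exists_transpose_eq_neg_mul_self_eq_neg_diagonal (R := ℝ)
    (fun i => μ i = -1) (even_card_eq_neg_one hK hR hdet)
  exact ⟨skewLog μ K J, transpose_skewLog hK hR hJ, exp_skewLog hK hR hJJ hJsupp⟩

end SkewLog

theorem exists_orthogonal_transpose_mul_mul_eq_diagonal_add (Q : Matrix n n ℝ) :
    ∃ P : Matrix n n ℝ, Pᵀ * P = 1 ∧
      ∃ (μ : n → ℝ) (K : Matrix n n ℝ), Kᵀ = -K ∧ Pᵀ * Q * P = diagonal μ + K := by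
  have hS : (Q + Qᵀ).IsHermitian := by
    rw [IsHermitian, conjTranspose_eq_transpose_of_trivial, transpose_add, transpose_transpose,
      add_comm]
  set P : Matrix n n ℝ := (hS.eigenvectorUnitary : Matrix n n ℝ)
  have hP : Pᵀ * P = 1 := by
    rw [← conjTranspose_eq_transpose_of_trivial, ← star_eq_conjTranspose]
    exact Unitary.coe_star_mul_self hS.eigenvectorUnitary
  have hdiag : Pᵀ * (Q + Qᵀ) * P = diagonal hS.eigenvalues := by
    have h := hS.conjStarAlgAut_star_eigenvectorUnitary
    rw [Unitary.conjStarAlgAut_apply, Unitary.coe_star, star_star, star_eq_conjTranspose,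
      conjTranspose_eq_transpose_of_trivial] at h
    simpa using h
  set μ : n → ℝ := fun i => hS.eigenvalues i / 2
  have hsum : Pᵀ * Q * P + (Pᵀ * Q * P)ᵀ = diagonal μ + diagonal μ := by
    rw [diagonal_add, transpose_mul, transpose_mul, transpose_transpose, ← Matrix.mul_assoc,
      ← add_mul, ← mul_add, hdiag]
    congr 1
    ext i
    ring
  refine ⟨P, hP, μ, Pᵀ * Q * P - diagonal μ, ?_, by abel⟩
  rw [transpose_sub, diagonal_transpose, eq_sub_of_add_eq' hsum]
  abel

end Matrix

theorem special_orthogonal_eq_exp_skew_general (C : ℕ)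
    (Q : Matrix (Fin C) (Fin C) ℝ) (hQ : Qᵀ * Q = 1) (hdet : Q.det = 1) :
    ∃ A : Matrix (Fin C) (Fin C) ℝ, Aᵀ = -A ∧ NormedSpace.exp A = Q := by
  obtain ⟨P, hP, μ, K, hK, hPQP⟩ := exists_orthogonal_transpose_mul_mul_eq_diagonal_add Q
  have hP' : P * Pᵀ = 1 := mul_eq_one_comm.mp hP
  have hR : (diagonal μ + K)ᵀ * (diagonal μ + K) = 1 := by
    simp only [← hPQP, transpose_mul, transpose_transpose, Matrix.mul_assoc]
    rw [← Matrix.mul_assoc P, hP', Matrix.one_mul, ← Matrix.mul_assoc Qᵀ, hQ, Matrix.one_mul,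
      hP]
  have hRdet : (diagonal μ + K).det = 1 := by
    rw [← hPQP, det_mul, det_mul, hdet, mul_one, mul_comm, ← det_mul, hP', det_one]
  obtain ⟨B, hB, hexp⟩ := exists_transpose_eq_neg_exp_eq_diagonal_add hK hR hRdet
  refine ⟨P * B * Pᵀ, by simp [Matrix.mul_assoc, hB], ?_⟩
  calc NormedSpace.exp (P * B * Pᵀ) = P * NormedSpace.exp B * Pᵀ :=
        exp_units_conj ⟨P, Pᵀ, hP', hP⟩ B
    _ = Q := by
      rw [hexp, ← hPQP, Matrix.mul_assoc, Matrix.mul_assoc, hP', Matrix.mul_one,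
        ← Matrix.mul_assoc, hP', Matrix.one_mul]

/-- Every real special orthogonal `C × C` matrix is the exponential of a real
skew-symmetric matrix. -/
theorem special_orthogonal_eq_exp_skew (C : ℕ) (hC : 0 < C)
    (Q : Matrix (Fin C) (Fin C) ℝ) (hQ : Qᵀ * Q = 1) (hdet : Q.det = 1) :
    ∃ A : Matrix (Fin C) (Fin C) ℝ, Aᵀ = -A ∧ NormedSpace.exp A = Q :=
  special_orthogonal_eq_exp_skew_general C Q hQ hdet
end

section
/- Let K and C be positive integers, let U and V be real orthogonal C×C matrices, and let λ_0, …, λ_{K−1} and μ_0, …, μ_{K−1} be vectors in ℝ^C. Suppose the joint spectral signatures of λ are pairwise distinct: for all i ≠ j in {1, …, C} there exists k with λ_k(i) ≠ λ_k(j). If U · diag(λ_k) · Uᵀ = V · diag(μ_k) · Vᵀ for every k ∈ {0, …, K−1}, then there exist a permutation σ of {1, …, C} and signs ε ∈ {1, −1}^C such that μ_k(j) = λ_k(σ(j)) for all k and j, and the j-th column of V equals ε_j times the σ(j)-th column of U for every j. -/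
open Matrix

/-- Rigidity of the shared-basis parameterization on the generic stratum: if two
shared-basis representations with pairwise distinct joint spectral signatures realize the
same frequency-indexed operators, then they differ by a signed permutation of eigenmodes. -/
theorem shared_basis_rigidity (K C : ℕ) (hK : 0 < K) (hC : 0 < C)
    (U V : Matrix (Fin C) (Fin C) ℝ) (hU : Uᵀ * U = 1) (hV : Vᵀ * V = 1)
    (lam mu : Fin K → Fin C → ℝ)
    (hdist : ∀ i j : Fin C, i ≠ j → ∃ k : Fin K, lam k i ≠ lam k j)
    (heq : ∀ k : Fin K,
      U * Matrix.diagonal (lam k) * Uᵀ = V * Matrix.diagonal (mu k) * Vᵀ) :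
    ∃ (σ : Equiv.Perm (Fin C)) (ε : Fin C → ℝ),
      (∀ j, ε j = 1 ∨ ε j = -1) ∧
      (∀ k j, mu k j = lam k (σ j)) ∧
      (∀ j i, V i j = ε j * U i (σ j)) := by
  classical
  set W : Matrix (Fin C) (Fin C) ℝ := Uᵀ * V with hWdef
  have hUU : U * Uᵀ = 1 := mul_eq_one_comm.mp hU
  have hWW : Wᵀ * W = 1 := by
    have hWt : Wᵀ = Vᵀ * U := by simp [hWdef, Matrix.transpose_mul]
    rw [hWt, hWdef,
      show Vᵀ * U * (Uᵀ * V) = Vᵀ * (U * Uᵀ) * V by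
        simp [Matrix.mul_assoc], hUU, Matrix.mul_one, hV]
  have hdiag : ∀ j j' : Fin C, (Wᵀ * W) j j' = ∑ i, W i j * W i j' := by
    intro j j'
    simp [Matrix.mul_apply, Matrix.transpose_apply]
  have comm : ∀ k, Matrix.diagonal (lam k) * W = W * Matrix.diagonal (mu k) := by
    intro k
    calc Matrix.diagonal (lam k) * W
        = (Uᵀ * U) * Matrix.diagonal (lam k) * (Uᵀ * V) := by
          rw [hU, Matrix.one_mul, hWdef]
      _ = Uᵀ * (U * Matrix.diagonal (lam k) * Uᵀ) * V := by
          simp [Matrix.mul_assoc]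
      _ = Uᵀ * (V * Matrix.diagonal (mu k) * Vᵀ) * V := by rw [heq k]
      _ = (Uᵀ * V) * Matrix.diagonal (mu k) * (Vᵀ * V) := by
          simp [Matrix.mul_assoc]
      _ = W * Matrix.diagonal (mu k) := by rw [hV, Matrix.mul_one, hWdef]
  have key : ∀ i j : Fin C, W i j ≠ 0 → ∀ k, lam k i = mu k j := by
    intro i j hij k
    have h := congrFun (congrFun (comm k) i) j
    rw [Matrix.diagonal_mul, Matrix.mul_diagonal] at h
    have h2 : lam k i * W i j = mu k j * W i j := by rw [h]; ring
    exact mul_right_cancel₀ hij h2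
  have hex : ∀ j : Fin C, ∃ i, W i j ≠ 0 := by
    intro j
    by_contra h
    push_neg at h
    have h0 : (Wᵀ * W) j j = 0 := by
      rw [hdiag]
      exact Finset.sum_eq_zero fun i _ => by rw [h i]; ring
    rw [hWW] at h0
    simp [Matrix.one_apply] at h0
  choose σ0 hσ0 using hex
  have huniq : ∀ j i : Fin C, W i j ≠ 0 → i = σ0 j := by
    intro j i hi
    by_contra hne
    obtain ⟨k, hk⟩ := hdist i (σ0 j) hne
    exact hk ((key i j hi k).trans (key (σ0 j) j (hσ0 j) k).symm)
  have hzero : ∀ j i : Fin C, i ≠ σ0 j → W i j = 0 := by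
    intro j i hne
    by_contra h
    exact hne (huniq j i h)
  have hinj : Function.Injective σ0 := by
    intro j j' hjj
    by_contra hne
    have h0 : (Wᵀ * W) j j' = 0 := by
      rw [hWW]
      simp [Matrix.one_apply, hne]
    rw [hdiag] at h0
    have hsum : ∑ i, W i j * W i j' = W (σ0 j) j * W (σ0 j) j' := by
      refine Finset.sum_eq_single (σ0 j) (fun i _ hi => ?_) (fun h => absurd (Finset.mem_univ _) h)
      rw [hzero j i hi]; ring
    rw [hsum] at h0
    have h1 : W (σ0 j) j' ≠ 0 := by rw [hjj]; exact hσ0 j'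
    exact (mul_ne_zero (hσ0 j) h1) h0
  have hbij : Function.Bijective σ0 := Finite.injective_iff_bijective.mp hinj
  refine ⟨Equiv.ofBijective σ0 hbij, fun j => W (σ0 j) j, ?_, ?_, ?_⟩
  · intro j
    have h1 : (Wᵀ * W) j j = 1 := by rw [hWW]; simp [Matrix.one_apply]
    rw [hdiag] at h1
    have hsum : ∑ i, W i j * W i j = W (σ0 j) j * W (σ0 j) j := by
      refine Finset.sum_eq_single (σ0 j) (fun i _ hi => ?_) (fun h => absurd (Finset.mem_univ _) h)
      rw [hzero j i hi]; ring
    rw [hsum] at h1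
    exact mul_self_eq_one_iff.mp h1
  · intro k j
    exact (key (σ0 j) j (hσ0 j) k).symm
  · intro j i
    have hVW : V = U * W := by
      rw [hWdef, ← Matrix.mul_assoc, hUU, Matrix.one_mul]
    have : V i j = ∑ l, U i l * W l j := by rw [hVW, Matrix.mul_apply]
    rw [this]
    rw [Finset.sum_eq_single (σ0 j) (fun l _ hl => by rw [hzero j l hl]; ring)
      (fun h => absurd (Finset.mem_univ _) h)]
    simp [Equiv.ofBijective]
    ring
end

section
/- Let K and C be positive integers, let U be a real orthogonal C×C matrix, and let λ_0, …, λ_{K−1} ∈ ℝ^C have pairwise distinct columns, i.e., for all i ≠ j there exists k with λ_k(i) ≠ λ_k(j). Then the set of real orthogonal C×C matrices V satisfying V · diag(λ_k) · Vᵀ = U · diag(λ_k) · Uᵀ for all k equals { U·D : D diagonal with all diagonal entries in {1, −1} }, and this set is finite of cardinality 2^C. -/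
open Matrix

/-- On the generic stratum, the stabilizer of a shared-basis representation is exactly the
set of sign flips `U * D`, a finite set of cardinality `2 ^ C`. -/
theorem shared_basis_stabilizer (K C : ℕ) (hK : 0 < K) (hC : 0 < C)
    (U : Matrix (Fin C) (Fin C) ℝ) (hU : Uᵀ * U = 1)
    (lam : Fin K → Fin C → ℝ)
    (hdist : ∀ i j : Fin C, i ≠ j → ∃ k : Fin K, lam k i ≠ lam k j) :
    ({V : Matrix (Fin C) (Fin C) ℝ | Vᵀ * V = 1 ∧
        ∀ k : Fin K,
          V * Matrix.diagonal (lam k) * Vᵀ = U * Matrix.diagonal (lam k) * Uᵀ}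
      = {W : Matrix (Fin C) (Fin C) ℝ | ∃ d : Fin C → ℝ,
          (∀ j, d j = 1 ∨ d j = -1) ∧ W = U * Matrix.diagonal d}) ∧
    Set.Finite {V : Matrix (Fin C) (Fin C) ℝ | Vᵀ * V = 1 ∧
        ∀ k : Fin K,
          V * Matrix.diagonal (lam k) * Vᵀ = U * Matrix.diagonal (lam k) * Uᵀ} ∧
    Set.ncard {V : Matrix (Fin C) (Fin C) ℝ | Vᵀ * V = 1 ∧
        ∀ k : Fin K,
          V * Matrix.diagonal (lam k) * Vᵀ = U * Matrix.diagonal (lam k) * Uᵀ}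
      = 2 ^ C := by
  have hUU : U * Uᵀ = 1 := mul_eq_one_comm.mp hU
  -- set equality
  have hset : ({V : Matrix (Fin C) (Fin C) ℝ | Vᵀ * V = 1 ∧
        ∀ k : Fin K,
          V * Matrix.diagonal (lam k) * Vᵀ = U * Matrix.diagonal (lam k) * Uᵀ}
      = {W : Matrix (Fin C) (Fin C) ℝ | ∃ d : Fin C → ℝ,
          (∀ j, d j = 1 ∨ d j = -1) ∧ W = U * Matrix.diagonal d}) := by
    ext V
    constructor
    · rintro ⟨hV, hcomm⟩
      have hVV : V * Vᵀ = 1 := mul_eq_one_comm.mp hV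
      set W : Matrix (Fin C) (Fin C) ℝ := Uᵀ * V with hWdef
      have hWWt : W * Wᵀ = 1 := by
        simp only [hWdef, Matrix.transpose_mul, Matrix.transpose_transpose]
        calc Uᵀ * V * (Vᵀ * U) = Uᵀ * (V * Vᵀ) * U := by noncomm_ring
          _ = 1 := by rw [hVV]; simpa using hU
      have hWtW : Wᵀ * W = 1 := mul_eq_one_comm.mp hWWt
      have hWD : ∀ k : Fin K, W * Matrix.diagonal (lam k) = Matrix.diagonal (lam k) * W := by
        intro k
        have h1 : W * Matrix.diagonal (lam k) * Wᵀ = Matrix.diagonal (lam k) := by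
          have := hcomm k
          calc W * Matrix.diagonal (lam k) * Wᵀ
              = Uᵀ * (V * Matrix.diagonal (lam k) * Vᵀ) * U := by
                simp only [hWdef, Matrix.transpose_mul, Matrix.transpose_transpose]
                noncomm_ring
            _ = Uᵀ * (U * Matrix.diagonal (lam k) * Uᵀ) * U := by rw [this]
            _ = (Uᵀ * U) * Matrix.diagonal (lam k) * (Uᵀ * U) := by noncomm_ring
            _ = Matrix.diagonal (lam k) := by rw [hU]; simp
        calc W * Matrix.diagonal (lam k) = W * Matrix.diagonal (lam k) * (Wᵀ * W) := by
              rw [hWtW]; simp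
          _ = (W * Matrix.diagonal (lam k) * Wᵀ) * W := by noncomm_ring
          _ = Matrix.diagonal (lam k) * W := by rw [h1]
      have hoff : ∀ i j : Fin C, i ≠ j → W i j = 0 := by
        intro i j hij
        obtain ⟨k, hk⟩ := hdist i j hij
        have := congrFun (congrFun (hWD k) i) j
        simp only [Matrix.mul_apply, Matrix.diagonal_apply] at this
        rw [Finset.sum_eq_single j (by intro b _ hb; simp [hb]) (by simp),
            Finset.sum_eq_single i (by intro b _ hb; simp [Ne.symm hb]) (by simp)] at this
        simp only [if_pos rfl, if_true] at this
        by_contra h0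
        rw [mul_comm] at this
        exact hk (mul_right_cancel₀ h0 this).symm
      have hWdiag : W = Matrix.diagonal (fun i => W i i) := by
        ext i j
        by_cases h : i = j
        · subst h; simp
        · simp [Matrix.diagonal_apply, h, hoff i j h]
      refine ⟨fun i => W i i, ?_, ?_⟩
      · intro j
        have := congrFun (congrFun hWWt j) j
        rw [hWdiag] at this
        simp [Matrix.mul_apply, Matrix.diagonal_apply, Matrix.one_apply] at this
        exact mul_self_eq_one_iff.mp this
      · rw [← hWdiag, hWdef, ← Matrix.mul_assoc, hUU, Matrix.one_mul]
    · rintro ⟨d, hd, rfl⟩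
      have hdd : Matrix.diagonal d * Matrix.diagonal d = 1 := by
        have hf : (fun i => d i * d i) = fun _ => (1:ℝ) :=
          funext fun i => by rcases hd i with h | h <;> rw [h] <;> norm_num
        rw [Matrix.diagonal_mul_diagonal, hf, Matrix.diagonal_one]
      constructor
      · rw [Matrix.transpose_mul, Matrix.diagonal_transpose]
        calc (Matrix.diagonal d) * Uᵀ * (U * Matrix.diagonal d)
            = Matrix.diagonal d * (Uᵀ * U) * Matrix.diagonal d := by noncomm_ring
          _ = 1 := by rw [hU, Matrix.mul_one, hdd]
      · intro k
        rw [Matrix.transpose_mul, Matrix.diagonal_transpose]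
        have hcd : Matrix.diagonal d * Matrix.diagonal (lam k) * Matrix.diagonal d
            = Matrix.diagonal (lam k) := by
          have hf : (fun i => d i * lam k i * d i) = lam k :=
            funext fun i => by rcases hd i with h | h <;> rw [h] <;> ring
          rw [Matrix.diagonal_mul_diagonal, Matrix.diagonal_mul_diagonal, hf]
        calc U * Matrix.diagonal d * Matrix.diagonal (lam k) * (Matrix.diagonal d * Uᵀ)
            = U * (Matrix.diagonal d * Matrix.diagonal (lam k) * Matrix.diagonal d) * Uᵀ := by
              noncomm_ring
          _ = U * Matrix.diagonal (lam k) * Uᵀ := by rw [hcd]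
  have hrange : {W : Matrix (Fin C) (Fin C) ℝ | ∃ d : Fin C → ℝ,
          (∀ j, d j = 1 ∨ d j = -1) ∧ W = U * Matrix.diagonal d}
        = Set.range (fun b : Fin C → Bool =>
            U * Matrix.diagonal (fun j => if b j then (1:ℝ) else -1)) := by
    ext W
    constructor
    · rintro ⟨d, hd, rfl⟩
      refine ⟨fun j => decide (d j = 1), ?_⟩
      have hfun : (fun j => if (decide (d j = 1) : Bool) then (1:ℝ) else -1) = d := by
        funext j
        rcases hd j with h | h
        · simp [h]
        · rw [h]; norm_num
      simp only [hfun]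
    · rintro ⟨b, rfl⟩
      exact ⟨_, fun j => by by_cases h : b j <;> simp [h], rfl⟩
  have hinj : Function.Injective (fun b : Fin C → Bool =>
      U * Matrix.diagonal (fun j => if b j then (1:ℝ) else -1)) := by
    intro b1 b2 h
    simp only at h
    have h2 : Matrix.diagonal (fun j => if b1 j then (1:ℝ) else -1)
        = Matrix.diagonal (fun j => if b2 j then (1:ℝ) else -1) := by
      calc Matrix.diagonal (fun j => if b1 j then (1:ℝ) else -1)
          = Uᵀ * (U * Matrix.diagonal (fun j => if b1 j then (1:ℝ) else -1)) := by
            rw [← Matrix.mul_assoc, hU, Matrix.one_mul]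
        _ = Uᵀ * (U * Matrix.diagonal (fun j => if b2 j then (1:ℝ) else -1)) := by rw [h]
        _ = _ := by rw [← Matrix.mul_assoc, hU, Matrix.one_mul]
    funext j
    have := congrFun (congrFun h2 j) j
    simp only [Matrix.diagonal_apply_eq] at this
    by_cases h1 : b1 j <;> by_cases hb2 : b2 j <;> simp [h1, hb2] at this ⊢
    · linarith
    · linarith
  refine ⟨hset, ?_, ?_⟩
  · rw [hset, hrange]; exact Set.finite_range _
  · rw [hset, hrange, ← Set.image_univ, Set.ncard_image_of_injective _ hinj]
    simp [Set.ncard_univ]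
end
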